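/- With H^d_j defined by Σ_{k≥0} H^d_j(k)t^k = (1+t)^j/(1−t)^d, the polynomial (x+1)(x+2)⋯(x+d−1−j) divides H^d_j(x) in ℚ[x] for all 0 ≤ j < d. -/

import Mathlib

open Polynomial

/-- The binomial coefficient polynomial `C(x + c, r) = (x+c)(x+c-1)⋯(x+c-r+1)/r!`. -/
noncomputable def binomPoly (c r : ℕ) : Polynomial ℚ :=
  Polynomial.C (1 / (r.factorial : ℚ)) *
    ∏ l ∈ Finset.range r, (Polynomial.X + Polynomial.C ((c : ℚ) - l))

/-- `H^d_j(x) = ∑_{i=0}^{j} C(j,i)·C(x + d - 1 - i, d - 1)`. -/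
noncomputable def Hdj (d j : ℕ) : Polynomial ℚ :=
  ∑ i ∈ Finset.range (j + 1), Polynomial.C ((j.choose i : ℚ)) * binomPoly (d - 1 - i) (d - 1)

/-! Each summand `C(j,i)·C(x + d - 1 - i, d - 1)` of `H^d_j` contains the factors
`(x + 1)⋯(x + d - 1 - i)` among the `d - 1` factors of its falling product, and
`d - 1 - i ≥ d - 1 - j`. -/

theorem prod_range_X_add_C_sub_eq_prod_Icc (c : ℕ) :
    ∏ k ∈ Finset.range c, (X + C ((c : ℚ) - k)) = ∏ l ∈ Finset.Icc 1 c, (X + C (l : ℚ)) :=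
  Finset.prod_nbij' (fun k => c - k) (fun l => c - l)
    (fun k hk => by simp only [Finset.mem_range, Finset.mem_Icc] at hk ⊢; omega)
    (fun l hl => by simp only [Finset.mem_range, Finset.mem_Icc] at hl ⊢; omega)
    (fun k hk => by simp only [Finset.mem_range] at hk; omega)
    (fun l hl => by simp only [Finset.mem_Icc] at hl; omega)
    (fun k hk => by
      simp only [Finset.mem_range] at hk
      rw [Nat.cast_sub hk.le])

theorem prod_Icc_X_add_C_dvd_binomPoly {c r : ℕ} (h : c ≤ r) :
    ∏ l ∈ Finset.Icc 1 c, (X + C (l : ℚ)) ∣ binomPoly c r := by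
  rw [← prod_range_X_add_C_sub_eq_prod_Icc]
  exact (Finset.prod_dvd_prod_of_subset _ _ _ (Finset.range_subset_range.mpr h)).mul_left _

theorem Hdj_divisibility (d j : ℕ) :
    (∏ l ∈ Finset.Icc 1 (d - 1 - j), (Polynomial.X + Polynomial.C (l : ℚ))) ∣ Hdj d j := by
  refine Finset.dvd_sum fun i hi => Dvd.dvd.mul_left ?_ _
  have hij : i ≤ j := Nat.lt_succ_iff.mp (Finset.mem_range.mp hi)
  exact (Finset.prod_dvd_prod_of_subset _ _ _ (Finset.Icc_subset_Icc le_rfl (by omega))).trans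
    (prod_Icc_X_add_C_dvd_binomPoly (Nat.sub_le _ _))
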